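/- Let (C, ▷, †) be a guarded Conway category and define Tr_† as above. Then Tr_† satisfies left-tightening: for f : ▷X × A → X × B and g : A' → A, Tr^X_{A',B}(f ∘ (▷X × g)) = Tr^X_{A,B}(f) ∘ g. -/
import Mathlib

open CategoryTheory CategoryTheory.Limits

/-- The trace induced by a guarded dagger:
`Tr^X_{A,B}(f) = π_r ∘ f ∘ (p_X × id_A) ∘ ⟨(π_ℓ ∘ f)†, id_A⟩`. -/
noncomputable def TrD {C : Type*} [Category C] [HasFiniteProducts C]
    (F : C ⥤ C) (p : 𝟭 C ⟶ F)
    (dag : ∀ {X Y : C}, (F.obj X ⨯ Y ⟶ X) → (Y ⟶ X))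
    {X A B : C} (f : F.obj X ⨯ A ⟶ X ⨯ B) : A ⟶ B :=
  prod.lift (dag (f ≫ prod.fst)) (𝟙 A) ≫ prod.map (p.app X) (𝟙 A) ≫ f ≫ prod.snd

/-- In a guarded Conway category `(C, ▷, †)`, the induced trace `Tr_†` satisfies
left-tightening: `Tr^X_{A',B}(f ∘ (▷X × g)) = Tr^X_{A,B}(f) ∘ g`. -/
theorem stmt13 {C : Type*} [Category C] [HasFiniteProducts C]
    (F : C ⥤ C) (p : 𝟭 C ⟶ F)
    (dag : ∀ {X Y : C}, (F.obj X ⨯ Y ⟶ X) → (Y ⟶ X))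
    (hfix : ∀ {X Y : C} (f : F.obj X ⨯ Y ⟶ X),
      dag f = prod.lift (dag f) (𝟙 Y) ≫ prod.map (p.app X) (𝟙 Y) ≫ f)
    (hparam : ∀ {X Y Z : C} (f : F.obj X ⨯ Y ⟶ X) (h : Z ⟶ Y),
      h ≫ dag f = dag (prod.map (𝟙 (F.obj X)) h ≫ f))
    (hcomp : ∀ {X Y Z : C} (f : F.obj X ⨯ Y ⟶ Z) (g : Z ⟶ X),
      dag (f ≫ g) = dag (prod.map (F.map g) (𝟙 Y) ≫ f) ≫ g)
    (hdd : ∀ {X Y : C} (f : F.obj X ⨯ (F.obj X ⨯ Y) ⟶ X),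
      dag (dag f) =
        dag (prod.lift (prod.fst : F.obj X ⨯ Y ⟶ F.obj X) (𝟙 (F.obj X ⨯ Y)) ≫ f)) :
    ∀ {X A A' B : C} (f : F.obj X ⨯ A ⟶ X ⨯ B) (g : A' ⟶ A),
      TrD F p @dag (prod.map (𝟙 (F.obj X)) g ≫ f) = g ≫ TrD F p @dag f := by
  intro X A A' B f g
  unfold TrD
  rw [Category.assoc, ← hparam]
  simp [prod.lift_map, ← Category.assoc, prod.map_map]
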